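/- arXiv:2507.06635 — 2 statements merged into one kernel-verified Lean document; each statement's English description precedes it below -/
import Mathlib

section
/- Let c ∈ {1,…,N−W+1} with w ≤ c and c+W−1 ≤ N, and let x = (x_z) be a vector with x_z ∈ [0,1] for z ∈ {1,…,N+w−1} and x_z = 0 for z ∉ {1,…,N+w−1}. Assume ρ'(1−x_z) ≠ 0 for every z ∈ {c,…,c+W−1}. Then x is a fixed point of the windowed DE update, i.e. x_z = f(z,x;c,w,W,ε) for all z ∈ {c,…,c+W−1}, if and only if x is a stationary point of the window potential restricted to the window coordinates, i.e. ∂U(x;ε,c)/∂x_z = 0 for all z ∈ {c,…,c+W−1}. -/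
open Finset

noncomputable section

namespace SC

/-- λ(x) = L'(x)/L'(1). -/
def lam (L : Polynomial ℝ) (x : ℝ) : ℝ :=
  (Polynomial.derivative L).eval x / (Polynomial.derivative L).eval 1

/-- ρ(x) = R'(x)/R'(1). -/
def rho (R : Polynomial ℝ) (x : ℝ) : ℝ :=
  (Polynomial.derivative R).eval x / (Polynomial.derivative R).eval 1

/-- ρ'(x) = R''(x)/R'(1). -/
def rhoD (R : Polynomial ℝ) (x : ℝ) : ℝ :=
  (Polynomial.derivative (Polynomial.derivative R)).eval x / (Polynomial.derivative R).eval 1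

/-- ε_z = ε for 1 ≤ z ≤ N, 0 otherwise. -/
def epsAt (ε : ℝ) (N : ℕ) (z : ℤ) : ℝ := if 1 ≤ z ∧ z ≤ (N : ℤ) then ε else 0

/-- Windowed DE update f(z, x; c, w, W, ε). -/
def deUpdate (L R : Polynomial ℝ) (ε : ℝ) (N w W : ℕ) (c : ℤ) (x : ℤ → ℝ) (z : ℤ) : ℝ :=
  if c ≤ z ∧ z ≤ c + (W : ℤ) - 1 then
    (1 / (w : ℝ)) * ∑ k ∈ Finset.range w, epsAt ε N (z - (k : ℤ)) *
      lam L (1 - (1 / (w : ℝ)) * ∑ j ∈ Finset.range w, rho R (1 - x (z + (j : ℤ) - (k : ℤ))))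
  else x z

/-- Window potential U(x; ε, c). -/
def windowU (L R : Polynomial ℝ) (ε : ℝ) (w W : ℕ) (c : ℤ) (x : ℤ → ℝ) : ℝ :=
  ∑ z ∈ Finset.Icc (c - ((w : ℤ) - 1)) (c + (W : ℤ) - 1),
    ((1 / (Polynomial.derivative R).eval 1) * (1 - R.eval (1 - x z))
      - x z * rho R (1 - x z)
      - (ε / (Polynomial.derivative L).eval 1) *
          L.eval (1 - (1 / (w : ℝ)) * ∑ j ∈ Finset.range w, rho R (1 - x (z + (j : ℤ)))))

/-- Single-system potential U(x; ε). -/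
def singleU (L R : Polynomial ℝ) (ε : ℝ) (x : ℝ) : ℝ :=
  (1 / (Polynomial.derivative R).eval 1) * (1 - R.eval (1 - x))
    - x * rho R (1 - x)
    - (ε / (Polynomial.derivative L).eval 1) * L.eval (1 - rho R (1 - x))

end SC

/-!
The partial derivative of the window potential in a window coordinate `x_z` factors as
`ρ'(1 - x_z) (x_z - f(z, x))`. Indeed, the single-position part
`(1 - R(1 - x_z))/R'(1) - x_z ρ(1 - x_z)` has derivative `x_z ρ'(1 - x_z)`, and `x_z` enters the
coupling term of position `z'` exactly when `z' = z - k` with `k < w`; these positions all lie in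
the summation range of the potential, and together they contribute
`-(ρ'(1 - x_z)/w) ∑_k ε λ(…)`, i.e. `-ρ'(1 - x_z) f(z, x)`. As `ρ'(1 - x_z) ≠ 0`, stationarity in
`x_z` is the fixed-point equation at `z`.
-/

theorem hasDerivAt_comp_update {𝕜 ι : Type*} [NontriviallyNormedField 𝕜] [DecidableEq ι]
    {g : 𝕜 → 𝕜} {g' : 𝕜} (x : ι → 𝕜) (i j : ι) (hg : HasDerivAt g g' (x i)) :
    HasDerivAt (fun s => g (Function.update x i s j)) (g' * if j = i then 1 else 0) (x i) := by
  by_cases hji : j = i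
  · subst hji
    simpa using hg
  · simp only [Function.update_of_ne hji, if_neg hji, mul_zero]
    exact hasDerivAt_const (x i) (g (x j))

theorem Finset.sum_mul_sum_ite_add_eq {G κ M : Type*} [AddGroup G] [DecidableEq G] [Semiring M]
    (S : Finset G) (T : Finset κ) (e : κ → G) (F : G → M) (z₀ : G)
    (hT : ∀ j ∈ T, z₀ - e j ∈ S) :
    ∑ z ∈ S, F z * ∑ j ∈ T, (if z + e j = z₀ then 1 else 0) = ∑ j ∈ T, F (z₀ - e j) := by
  simp_rw [Finset.mul_sum, mul_ite, mul_one, mul_zero]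
  rw [Finset.sum_comm]
  refine Finset.sum_congr rfl fun j hj => ?_
  simp_rw [← eq_sub_iff_add_eq]
  rw [Finset.sum_ite_eq' S, if_pos (hT j hj)]

namespace SC

def localPotential (R : Polynomial ℝ) (t : ℝ) : ℝ :=
  (1 / (Polynomial.derivative R).eval 1) * (1 - R.eval (1 - t)) - t * rho R (1 - t)

def checkErasure (R : Polynomial ℝ) (w : ℕ) (x : ℤ → ℝ) (z : ℤ) : ℝ :=
  1 - (1 / (w : ℝ)) * ∑ j ∈ Finset.range w, rho R (1 - x (z + (j : ℤ)))

variable (L R : Polynomial ℝ)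

theorem hasDerivAt_rho_one_sub (t : ℝ) :
    HasDerivAt (fun s => rho R (1 - s)) (-rhoD R (1 - t)) t :=
  ((((Polynomial.derivative R).hasDerivAt (1 - t)).comp t
    ((hasDerivAt_id t).const_sub 1)).div_const ((Polynomial.derivative R).eval 1)).congr_deriv
    (by simp only [rhoD]; ring)

theorem hasDerivAt_localPotential (t : ℝ) :
    HasDerivAt (localPotential R) (t * rhoD R (1 - t)) t := by
  have hR := ((R.hasDerivAt (1 - t)).comp t ((hasDerivAt_id' t).const_sub 1)).const_sub 1
  exact ((hR.const_mul (1 / (Polynomial.derivative R).eval 1)).sub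
    ((hasDerivAt_id' t).mul (hasDerivAt_rho_one_sub R t))).congr_deriv
    (by simp only [rho]; ring)

theorem hasDerivAt_checkErasure_update (w : ℕ) (x : ℤ → ℝ) (z₀ z : ℤ) :
    HasDerivAt (fun s => checkErasure R w (Function.update x z₀ s) z)
      (rhoD R (1 - x z₀) / w * ∑ j ∈ Finset.range w, if z + (j : ℤ) = z₀ then 1 else 0)
      (x z₀) :=
  (((HasDerivAt.fun_sum (u := Finset.range w) fun j _ =>
    hasDerivAt_comp_update x z₀ (z + (j : ℤ)) (hasDerivAt_rho_one_sub R (x z₀))).const_mul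
      (1 / (w : ℝ))).const_sub 1).congr_deriv
    (by rw [← Finset.mul_sum]; ring)

theorem hasDerivAt_windowU_update (ε : ℝ) {w : ℕ} (hw : 1 ≤ w) (W : ℕ) {c z₀ : ℤ}
    (hcz : c ≤ z₀) (hzc : z₀ ≤ c + (W : ℤ) - 1) (x : ℤ → ℝ) :
    HasDerivAt (fun s => windowU L R ε w W c (Function.update x z₀ s))
      (rhoD R (1 - x z₀) *
        (x z₀ - (1 / (w : ℝ)) * ∑ k ∈ Finset.range w, ε * lam L (checkErasure R w x (z₀ - k))))
      (x z₀) := by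
  set S := Finset.Icc (c - ((w : ℤ) - 1)) (c + (W : ℤ) - 1)
  have hS : ∀ k ∈ Finset.range w, z₀ - (k : ℤ) ∈ S := fun k hk => by
    rw [Finset.mem_range] at hk
    rw [Finset.mem_Icc]; omega
  have h := HasDerivAt.fun_sum (u := S) fun z _ =>
    (hasDerivAt_comp_update x z₀ z (hasDerivAt_localPotential R (x z₀))).sub
      (((L.hasDerivAt _).comp _ (hasDerivAt_checkErasure_update R w x z₀ z)).const_mul
        (ε / (Polynomial.derivative L).eval 1))
  refine h.congr_deriv ?_
  have hz₀ : z₀ ∈ S := by simpa using hS 0 (Finset.mem_range.mpr hw)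
  have hlocal : ∑ i ∈ S, (x z₀ * rhoD R (1 - x z₀) * if i = z₀ then 1 else 0) =
      x z₀ * rhoD R (1 - x z₀) := by
    rw [← Finset.mul_sum, Finset.sum_ite_eq' S z₀, if_pos hz₀, mul_one]
  have hcoupling : ∑ i ∈ S, ε / (Polynomial.derivative L).eval 1 *
        ((Polynomial.derivative L).eval (checkErasure R w x i) *
          (rhoD R (1 - x z₀) / w * ∑ j ∈ Finset.range w, if i + (j : ℤ) = z₀ then 1 else 0)) =
      rhoD R (1 - x z₀) / w * ∑ k ∈ Finset.range w, ε * lam L (checkErasure R w x (z₀ - k)) := by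
    rw [← Finset.sum_mul_sum_ite_add_eq S _ _ (fun i => ε * lam L (checkErasure R w x i)) z₀ hS,
      Finset.mul_sum]
    refine Finset.sum_congr rfl fun i _ => ?_
    simp only [lam]
    ring
  rw [Function.update_eq_self, Finset.sum_sub_distrib, hlocal, hcoupling]
  ring

theorem deUpdate_eq_of_mem (ε : ℝ) (N w W : ℕ) {c z : ℤ} (hcz : c ≤ z) (hzc : z ≤ c + (W : ℤ) - 1)
    (hwz : (w : ℤ) ≤ z) (hzN : z ≤ (N : ℤ)) (x : ℤ → ℝ) :
    deUpdate L R ε N w W c x z =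
      (1 / (w : ℝ)) * ∑ k ∈ Finset.range w, ε * lam L (checkErasure R w x (z - k)) := by
  rw [deUpdate, if_pos ⟨hcz, hzc⟩]
  congr 1
  refine Finset.sum_congr rfl fun k hk => ?_
  rw [Finset.mem_range] at hk
  simp only [epsAt, if_pos (show 1 ≤ z - k ∧ z - k ≤ N by omega), checkErasure, add_sub_right_comm]

theorem fixedPoint_iff_stationary_general
    (L R : Polynomial ℝ)
    (ε : ℝ)
    (N w W : ℕ) (hw : 1 ≤ w)
    (c : ℕ) (hc1 : w ≤ c) (hc2 : c + W ≤ N + 1)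
    (x : ℤ → ℝ)
    (hrho : ∀ z : ℤ, (c : ℤ) ≤ z → z ≤ (c : ℤ) + (W : ℤ) - 1 → rhoD R (1 - x z) ≠ 0) :
    (∀ z : ℤ, (c : ℤ) ≤ z → z ≤ (c : ℤ) + (W : ℤ) - 1 →
        x z = deUpdate L R ε N w W (c : ℤ) x z) ↔
    (∀ z : ℤ, (c : ℤ) ≤ z → z ≤ (c : ℤ) + (W : ℤ) - 1 →
        deriv (fun s : ℝ => windowU L R ε w W (c : ℤ) (Function.update x z s)) (x z) = 0) := by
  refine forall₃_congr fun z hcz hzc => ?_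
  rw [(hasDerivAt_windowU_update L R ε hw W hcz hzc x).deriv,
    ← deUpdate_eq_of_mem L R ε N w W hcz hzc (by omega) (by omega) x,
    mul_eq_zero, sub_eq_zero, or_iff_right (hrho z hcz hzc)]

/-- a vector is a fixed point of the windowed DE update on the window
coordinates if and only if it is a stationary point of the window potential restricted to
the window coordinates (assuming ρ'(1−x_z) ≠ 0 throughout the window). -/
theorem fixedPoint_iff_stationary
    (L R : Polynomial ℝ)
    (hLcoeff : ∀ i, 0 ≤ L.coeff i) (hRcoeff : ∀ i, 0 ≤ R.coeff i)
    (hL1 : L.eval 1 = 1) (hR1 : R.eval 1 = 1)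
    (hL'pos : 0 < (Polynomial.derivative L).eval 1)
    (hR'pos : 0 < (Polynomial.derivative R).eval 1)
    (ε : ℝ) (hε0 : 0 ≤ ε) (hε1 : ε ≤ 1)
    (N w W : ℕ) (hw : 1 ≤ w) (hwW : w ≤ W) (hWN : W ≤ N)
    (c : ℕ) (hc1 : w ≤ c) (hc2 : c + W ≤ N + 1)
    (x : ℤ → ℝ)
    (hxin : ∀ z : ℤ, 1 ≤ z → z ≤ (N : ℤ) + (w : ℤ) - 1 → x z ∈ Set.Icc (0 : ℝ) 1)
    (hxout : ∀ z : ℤ, ¬ (1 ≤ z ∧ z ≤ (N : ℤ) + (w : ℤ) - 1) → x z = 0)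
    (hrho : ∀ z : ℤ, (c : ℤ) ≤ z → z ≤ (c : ℤ) + (W : ℤ) - 1 → rhoD R (1 - x z) ≠ 0) :
    (∀ z : ℤ, (c : ℤ) ≤ z → z ≤ (c : ℤ) + (W : ℤ) - 1 →
        x z = deUpdate L R ε N w W (c : ℤ) x z) ↔
    (∀ z : ℤ, (c : ℤ) ≤ z → z ≤ (c : ℤ) + (W : ℤ) - 1 →
        deriv (fun s : ℝ => windowU L R ε w W (c : ℤ) (Function.update x z s)) (x z) = 0) :=
  fixedPoint_iff_stationary_general L R ε N w W hw c hc1 hc2 x hrho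

end SC
end
end

section
/- The DE solution is non-increasing in the iteration index within each window: for all c ∈ {1,…,N−W+1}, all t ∈ {0,…,T−1} and all z ∈ ℤ, x_z^{(c,t+1)} ≤ x_z^{(c,t)}; moreover 0 ≤ x_z^{(c,t)} ≤ 1 for all c, t, z. -/
/-!
On `[0,1]^ℤ` the windowed update is monotone and maps the cube into itself: `λ` and `ρ` have
nonnegative coefficients, so they are increasing and bounded by their value at `1`, and the
update averages products of such values. For a monotone self-map `f`, once a point satisfies
`f x ≤ x` all its further iterates decrease. The all-one initial state satisfies this, and the
inequality survives each shift of the window: positions shared by the old and the new window see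
the same update, while the single new position `c + W` has never been updated and still carries
the value `1`.
-/

open Finset

noncomputable section

namespace SC

theorem _root_.MonotoneOn.mem_and_map_le_of_orbit {α : Type*} [Preorder α] {f : α → α}
    {s : Set α} (hf : MonotoneOn f s) (hfs : Set.MapsTo f s s) {x : ℕ → α} {T : ℕ}
    (hx : ∀ t < T, x (t + 1) = f (x t)) (h0 : x 0 ∈ s) (h0le : f (x 0) ≤ x 0) :
    ∀ t ≤ T, x t ∈ s ∧ f (x t) ≤ x t := by
  intro t
  induction t with
  | zero => exact fun _ => ⟨h0, h0le⟩
  | succ t ih =>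
    intro ht
    obtain ⟨hs, hle⟩ := ih (by omega)
    rw [hx t ht]
    exact ⟨hfs hs, hf (hfs hs) hs hle⟩

section NonnegCoeff

variable {P : Polynomial ℝ}

theorem eval_nonneg_of_coeff_nonneg (hP : ∀ i, 0 ≤ P.coeff i) {x : ℝ} (hx : 0 ≤ x) :
    0 ≤ P.eval x := by
  rw [Polynomial.eval_eq_sum_range]
  exact sum_nonneg fun i _ => mul_nonneg (hP i) (pow_nonneg hx i)

theorem eval_monotoneOn_of_coeff_nonneg (hP : ∀ i, 0 ≤ P.coeff i) :
    MonotoneOn P.eval (Set.Ici 0) := by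
  intro x hx y _ hxy
  change P.eval x ≤ P.eval y
  rw [Polynomial.eval_eq_sum_range, Polynomial.eval_eq_sum_range]
  exact sum_le_sum fun i _ => mul_le_mul_of_nonneg_left (pow_le_pow_left₀ hx hxy i) (hP i)

theorem coeff_derivative_nonneg (hP : ∀ i, 0 ≤ P.coeff i) (i : ℕ) :
    0 ≤ (Polynomial.derivative P).coeff i := by
  rw [Polynomial.coeff_derivative]
  exact mul_nonneg (hP _) (by positivity)

theorem rho_monotoneOn (hP : ∀ i, 0 ≤ P.coeff i) : MonotoneOn (rho P) (Set.Ici 0) :=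
  fun _ hx _ hy hxy => div_le_div_of_nonneg_right
    (eval_monotoneOn_of_coeff_nonneg (coeff_derivative_nonneg hP) hx hy hxy)
    (eval_nonneg_of_coeff_nonneg (coeff_derivative_nonneg hP) zero_le_one)

theorem rho_mapsTo_Icc (hP : ∀ i, 0 ≤ P.coeff i) (hP' : 0 < (Polynomial.derivative P).eval 1) :
    Set.MapsTo (rho P) (Set.Icc 0 1) (Set.Icc 0 1) := fun _ hy =>
  ⟨div_nonneg (eval_nonneg_of_coeff_nonneg (coeff_derivative_nonneg hP) hy.1) hP'.le,
    (div_le_one hP').2 <| eval_monotoneOn_of_coeff_nonneg (coeff_derivative_nonneg hP)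
      hy.1 (zero_le_one : (0 : ℝ) ≤ 1) hy.2⟩

end NonnegCoeff

theorem lam_eq_rho : lam = rho := rfl

theorem one_div_mul_sum_range_mem_Icc (w : ℕ) {f : ℕ → ℝ}
    (hf : ∀ k ∈ range w, f k ∈ Set.Icc 0 1) :
    1 / (w : ℝ) * ∑ k ∈ range w, f k ∈ Set.Icc 0 1 := by
  refine ⟨mul_nonneg (by positivity) (sum_nonneg fun k hk => (hf k hk).1), ?_⟩
  rw [one_div]
  refine inv_mul_le_one_of_le₀ ?_ w.cast_nonneg
  simpa using sum_le_card_nsmul _ _ _ fun k hk => (hf k hk).2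

section Update

variable {L R : Polynomial ℝ} {ε : ℝ} {N w W : ℕ} {c : ℤ}

theorem one_sub_avg_rho_mem_Icc (hR : ∀ i, 0 ≤ R.coeff i)
    (hR' : 0 < (Polynomial.derivative R).eval 1) {x : ℤ → ℝ} (hx : x ∈ Set.Icc 0 1)
    (g : ℕ → ℤ) :
    1 - 1 / (w : ℝ) * ∑ j ∈ range w, rho R (1 - x (g j)) ∈ Set.Icc 0 1 :=
  Set.Icc.one_sub_mem <| one_div_mul_sum_range_mem_Icc w fun j _ =>
    rho_mapsTo_Icc hR hR' (Set.Icc.one_sub_mem ⟨hx.1 (g j), hx.2 (g j)⟩)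

theorem one_sub_avg_rho_mono (hR : ∀ i, 0 ≤ R.coeff i) {x y : ℤ → ℝ}
    (hxy : x ≤ y) (hy : y ≤ 1) (g : ℕ → ℤ) :
    1 - 1 / (w : ℝ) * ∑ j ∈ range w, rho R (1 - x (g j)) ≤
      1 - 1 / (w : ℝ) * ∑ j ∈ range w, rho R (1 - y (g j)) := by
  have hsum : ∑ j ∈ range w, rho R (1 - y (g j)) ≤ ∑ j ∈ range w, rho R (1 - x (g j)) :=
    sum_le_sum fun j _ => rho_monotoneOn hR (sub_nonneg.2 (hy (g j)))
      (sub_nonneg.2 ((hxy (g j)).trans (hy (g j)))) (sub_le_sub_left (hxy (g j)) 1)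
  have := mul_le_mul_of_nonneg_left hsum (by positivity : (0 : ℝ) ≤ 1 / w)
  linarith

theorem epsAt_nonneg (hε : 0 ≤ ε) (z : ℤ) : 0 ≤ epsAt ε N z := by
  unfold epsAt
  split
  · exact hε
  · exact le_rfl

theorem epsAt_mem_Icc (hε : ε ∈ Set.Icc 0 1) (z : ℤ) : epsAt ε N z ∈ Set.Icc 0 1 := by
  unfold epsAt
  split
  · exact hε
  · exact Set.left_mem_Icc.2 zero_le_one

theorem deUpdate_mem_Icc (hL : ∀ i, 0 ≤ L.coeff i) (hR : ∀ i, 0 ≤ R.coeff i)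
    (hL' : 0 < (Polynomial.derivative L).eval 1) (hR' : 0 < (Polynomial.derivative R).eval 1)
    (hε : ε ∈ Set.Icc 0 1) {x : ℤ → ℝ} (hx : x ∈ Set.Icc 0 1) (z : ℤ) :
    deUpdate L R ε N w W c x z ∈ Set.Icc 0 1 := by
  unfold deUpdate
  split
  · exact one_div_mul_sum_range_mem_Icc w fun k _ => unitInterval.mul_mem (epsAt_mem_Icc hε _)
      (lam_eq_rho ▸ rho_mapsTo_Icc hL hL' (one_sub_avg_rho_mem_Icc hR hR' hx _))
  · exact ⟨hx.1 z, hx.2 z⟩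

theorem deUpdate_monotoneOn (hL : ∀ i, 0 ≤ L.coeff i) (hR : ∀ i, 0 ≤ R.coeff i)
    (hR' : 0 < (Polynomial.derivative R).eval 1) (hε : 0 ≤ ε) :
    MonotoneOn (deUpdate L R ε N w W c) (Set.Icc 0 1) := by
  intro x hx y hy hxy z
  unfold deUpdate
  split
  · gcongr with k
    · exact epsAt_nonneg hε _
    · exact lam_eq_rho ▸ rho_monotoneOn hL (one_sub_avg_rho_mem_Icc hR hR' hx _).1
        (one_sub_avg_rho_mem_Icc hR hR' hy _).1 (one_sub_avg_rho_mono hR hxy hy.2 _)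
  · exact hxy z

theorem deUpdate_of_outside_window {x : ℤ → ℝ} {z : ℤ} (hz : ¬(c ≤ z ∧ z ≤ c + W - 1)) :
    deUpdate L R ε N w W c x z = x z :=
  if_neg hz

theorem deUpdate_congr_window {c' z : ℤ} {x : ℤ → ℝ} (hz : c ≤ z ∧ z ≤ c + W - 1)
    (hz' : c' ≤ z ∧ z ≤ c' + W - 1) :
    deUpdate L R ε N w W c x z = deUpdate L R ε N w W c' x z := by
  unfold deUpdate
  rw [if_pos hz, if_pos hz']

end Update

-- The DE solution vanishes outside the coupled positions `1, …, N + w - 1`,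
-- hence the truncation.
def windowStep (L R : Polynomial ℝ) (ε : ℝ) (N w W : ℕ) (c : ℤ) (x : ℤ → ℝ) : ℤ → ℝ :=
  (Set.Icc 1 ((N : ℤ) + w - 1)).indicator (deUpdate L R ε N w W c x)

section WindowStep

variable {L R : Polynomial ℝ} {ε : ℝ} {N w W : ℕ} {c : ℤ}

theorem windowStep_mapsTo_Icc (hL : ∀ i, 0 ≤ L.coeff i) (hR : ∀ i, 0 ≤ R.coeff i)
    (hL' : 0 < (Polynomial.derivative L).eval 1) (hR' : 0 < (Polynomial.derivative R).eval 1)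
    (hε : ε ∈ Set.Icc 0 1) :
    Set.MapsTo (windowStep L R ε N w W c) (Set.Icc 0 1) (Set.Icc 0 1) := fun _ hx =>
  ⟨Set.indicator_nonneg fun z _ => (deUpdate_mem_Icc hL hR hL' hR' hε hx z).1,
    fun z => Set.indicator_apply_le' (fun _ => (deUpdate_mem_Icc hL hR hL' hR' hε hx z).2)
      fun _ => zero_le_one⟩

theorem windowStep_monotoneOn (hL : ∀ i, 0 ≤ L.coeff i) (hR : ∀ i, 0 ≤ R.coeff i)
    (hR' : 0 < (Polynomial.derivative R).eval 1) (hε : 0 ≤ ε) :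
    MonotoneOn (windowStep L R ε N w W c) (Set.Icc 0 1) := fun _ hx _ hy hxy _ =>
  Set.indicator_le_indicator (deUpdate_monotoneOn hL hR hR' hε hx hy hxy _)

theorem windowStep_apply_of_window_lt {x : ℤ → ℝ} {z : ℤ} (hz : z ∈ Set.Icc 1 ((N : ℤ) + w - 1))
    (hcz : c + W ≤ z) : windowStep L R ε N w W c x z = x z := by
  rw [windowStep, Set.indicator_of_mem hz, deUpdate_of_outside_window (by omega)]

theorem windowStep_succ_le (hL : ∀ i, 0 ≤ L.coeff i) (hR : ∀ i, 0 ≤ R.coeff i)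
    (hL' : 0 < (Polynomial.derivative L).eval 1) (hR' : 0 < (Polynomial.derivative R).eval 1)
    (hε : ε ∈ Set.Icc 0 1) {y : ℤ → ℝ} (hy : y ∈ Set.Icc 0 1)
    (hone : ∀ z ∈ Set.Icc 1 ((N : ℤ) + w - 1), c + W ≤ z → y z = 1)
    (hle : windowStep L R ε N w W c y ≤ y) : windowStep L R ε N w W (c + 1) y ≤ y := by
  intro z
  by_cases hz : z ∈ Set.Icc 1 ((N : ℤ) + w - 1)
  swap
  · simpa [windowStep, hz] using hy.1 z
  have hle_z := hle z
  simp only [windowStep, Set.indicator_of_mem hz] at hle_z ⊢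
  by_cases hnew : c + W ≤ z
  · exact hone z hz hnew ▸ (deUpdate_mem_Icc hL hR hL' hR' hε hy z).2
  by_cases hold : c + 1 ≤ z
  · rwa [deUpdate_congr_window (c' := c) ⟨hold, by omega⟩ ⟨by omega, by omega⟩]
  · rw [deUpdate_of_outside_window (by omega)]

end WindowStep

structure IsWindowedDESolution (L R : Polynomial ℝ) (ε : ℝ) (N w W T : ℕ)
    (X : ℕ → ℕ → ℤ → ℝ) : Prop where
  init : ∀ z : ℤ, 1 ≤ z → z ≤ (N : ℤ) + (w : ℤ) - 1 → X 1 0 z = 1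
  out : ∀ c t : ℕ, ∀ z : ℤ, ¬ (1 ≤ z ∧ z ≤ (N : ℤ) + (w : ℤ) - 1) → X c t z = 0
  update : ∀ c : ℕ, 1 ≤ c → c + W ≤ N + 1 → ∀ t : ℕ, t + 1 ≤ T →
    ∀ z : ℤ, 1 ≤ z → z ≤ (N : ℤ) + (w : ℤ) - 1 →
    X c (t + 1) z = deUpdate L R ε N w W (c : ℤ) (X c t) z
  shift : ∀ c : ℕ, 1 ≤ c → (c + 1) + W ≤ N + 1 → ∀ z : ℤ, X (c + 1) 0 z = X c T z

namespace IsWindowedDESolution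

variable {L R : Polynomial ℝ} {ε : ℝ} {N w W T : ℕ} {X : ℕ → ℕ → ℤ → ℝ} {c : ℕ}

theorem init_eq_indicator (hX : IsWindowedDESolution L R ε N w W T X) :
    X 1 0 = (Set.Icc 1 ((N : ℤ) + w - 1)).indicator 1 := by
  funext z
  by_cases hz : z ∈ Set.Icc 1 ((N : ℤ) + w - 1)
  · rw [Set.indicator_of_mem hz, hX.init z hz.1 hz.2, Pi.one_apply]
  · rw [Set.indicator_of_notMem hz, hX.out 1 0 z hz]

theorem succ_eq_windowStep (hX : IsWindowedDESolution L R ε N w W T X) (hc : 1 ≤ c)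
    (hcW : c + W ≤ N + 1) {t : ℕ} (ht : t < T) :
    X c (t + 1) = windowStep L R ε N w W c (X c t) := by
  funext z
  by_cases hz : z ∈ Set.Icc 1 ((N : ℤ) + w - 1)
  · rw [windowStep, Set.indicator_of_mem hz, hX.update c hc hcW t ht z hz.1 hz.2]
  · rw [windowStep, Set.indicator_of_notMem hz, hX.out c (t + 1) z hz]

theorem apply_eq_apply_zero_of_window_lt (hX : IsWindowedDESolution L R ε N w W T X)
    (hc : 1 ≤ c) (hcW : c + W ≤ N + 1) {z : ℤ} (hz : z ∈ Set.Icc 1 ((N : ℤ) + w - 1))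
    (hcz : (c : ℤ) + W ≤ z) : ∀ t ≤ T, X c t z = X c 0 z := by
  intro t
  induction t with
  | zero => exact fun _ => rfl
  | succ t ih =>
    intro ht
    rw [hX.succ_eq_windowStep hc hcW ht, windowStep_apply_of_window_lt hz hcz, ih (by omega)]

theorem eq_one_of_window_lt (hX : IsWindowedDESolution L R ε N w W T X) (hc : 1 ≤ c)
    (hcW : c + W ≤ N + 1) {t : ℕ} (ht : t ≤ T) {z : ℤ}
    (hz : z ∈ Set.Icc 1 ((N : ℤ) + w - 1)) (hcz : (c : ℤ) + W ≤ z) : X c t z = 1 := by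
  rw [hX.apply_eq_apply_zero_of_window_lt hc hcW hz hcz t ht]
  clear ht
  induction c, hc using Nat.le_induction with
  | base => exact hX.init z hz.1 hz.2
  | succ c hc ih =>
    have hcz' : (c : ℤ) + W ≤ z := by push_cast at hcz; omega
    rw [hX.shift c hc hcW, hX.apply_eq_apply_zero_of_window_lt hc (by omega) hz hcz' T le_rfl]
    exact ih (by omega) hcz'

theorem mem_Icc_and_windowStep_le (hX : IsWindowedDESolution L R ε N w W T X)
    (hL : ∀ i, 0 ≤ L.coeff i) (hR : ∀ i, 0 ≤ R.coeff i)
    (hL' : 0 < (Polynomial.derivative L).eval 1) (hR' : 0 < (Polynomial.derivative R).eval 1)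
    (hε : ε ∈ Set.Icc 0 1) (hc : 1 ≤ c) (hcW : c + W ≤ N + 1) :
    ∀ t ≤ T, X c t ∈ Set.Icc 0 1 ∧ windowStep L R ε N w W c (X c t) ≤ X c t := by
  have orbit (c : ℕ) (hc : 1 ≤ c) (hcW : c + W ≤ N + 1) :=
    (windowStep_monotoneOn hL hR hR' hε.1).mem_and_map_le_of_orbit
      (windowStep_mapsTo_Icc hL hR hL' hR' hε) (x := X c)
      fun _ ht => hX.succ_eq_windowStep hc hcW ht
  induction c, hc using Nat.le_induction with
  | base =>
    have hmem : X 1 0 ∈ Set.Icc 0 1 := by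
      rw [hX.init_eq_indicator]
      exact ⟨Set.indicator_nonneg fun _ _ => zero_le_one,
        Set.indicator_le_self' fun _ _ => zero_le_one⟩
    refine orbit 1 le_rfl hcW hmem fun z => ?_
    rw [hX.init_eq_indicator] at hmem ⊢
    exact Set.indicator_le_indicator (deUpdate_mem_Icc hL hR hL' hR' hε hmem z).2
  | succ c hc ih =>
    obtain ⟨hmem, hle⟩ := ih (by omega) T le_rfl
    have hshift : X (c + 1) 0 = X c T := funext (hX.shift c hc hcW)
    refine orbit (c + 1) (by omega) hcW (hshift ▸ hmem) ?_
    rw [hshift, Nat.cast_succ]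
    exact windowStep_succ_le hL hR hL' hR' hε hmem
      (fun z hz hcz => hX.eq_one_of_window_lt hc (by omega) le_rfl hz hcz) hle

end IsWindowedDESolution

theorem de_decreasing_in_t_and_bounded_general
    (L R : Polynomial ℝ)
    (hLcoeff : ∀ i, 0 ≤ L.coeff i) (hRcoeff : ∀ i, 0 ≤ R.coeff i)
    (hL'pos : 0 < (Polynomial.derivative L).eval 1)
    (hR'pos : 0 < (Polynomial.derivative R).eval 1)
    (ε : ℝ) (hε0 : 0 ≤ ε) (hε1 : ε ≤ 1)
    (N w W T : ℕ)
    -- the windowed-decoding DE solution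
    (X : ℕ → ℕ → ℤ → ℝ)
    (hinit : ∀ z : ℤ, 1 ≤ z → z ≤ (N : ℤ) + (w : ℤ) - 1 → X 1 0 z = 1)
    (hout : ∀ c t : ℕ, ∀ z : ℤ, ¬ (1 ≤ z ∧ z ≤ (N : ℤ) + (w : ℤ) - 1) → X c t z = 0)
    (hupd : ∀ c : ℕ, 1 ≤ c → c + W ≤ N + 1 → ∀ t : ℕ, t + 1 ≤ T →
      ∀ z : ℤ, 1 ≤ z → z ≤ (N : ℤ) + (w : ℤ) - 1 →
      X c (t + 1) z = deUpdate L R ε N w W (c : ℤ) (X c t) z)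
    (hshiftwin : ∀ c : ℕ, 1 ≤ c → (c + 1) + W ≤ N + 1 → ∀ z : ℤ, X (c + 1) 0 z = X c T z) :
    (∀ c : ℕ, 1 ≤ c → c + W ≤ N + 1 → ∀ t : ℕ, t < T → ∀ z : ℤ,
        X c (t + 1) z ≤ X c t z) ∧
    (∀ c : ℕ, 1 ≤ c → c + W ≤ N + 1 → ∀ t : ℕ, t ≤ T → ∀ z : ℤ,
        0 ≤ X c t z ∧ X c t z ≤ 1) := by
  have hX : IsWindowedDESolution L R ε N w W T X := ⟨hinit, hout, hupd, hshiftwin⟩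
  have invariant (c : ℕ) (hc : 1 ≤ c) (hcW : c + W ≤ N + 1) :=
    hX.mem_Icc_and_windowStep_le hLcoeff hRcoeff hL'pos hR'pos ⟨hε0, hε1⟩ hc hcW
  refine ⟨fun c hc hcW t ht z => ?_, fun c hc hcW t ht z => ?_⟩
  · rw [hX.succ_eq_windowStep hc hcW ht]
    exact (invariant c hc hcW t ht.le).2 z
  · obtain ⟨hmem, -⟩ := invariant c hc hcW t ht
    exact ⟨hmem.1 z, hmem.2 z⟩

/-- within each window configuration the DE solution is non-increasing in
the iteration index, and all DE values lie in `[0,1]`. -/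
theorem de_decreasing_in_t_and_bounded
    (L R : Polynomial ℝ)
    (hLcoeff : ∀ i, 0 ≤ L.coeff i) (hRcoeff : ∀ i, 0 ≤ R.coeff i)
    (hL1 : L.eval 1 = 1) (hR1 : R.eval 1 = 1)
    (hL'pos : 0 < (Polynomial.derivative L).eval 1)
    (hR'pos : 0 < (Polynomial.derivative R).eval 1)
    (ε : ℝ) (hε0 : 0 ≤ ε) (hε1 : ε ≤ 1)
    (N w W T : ℕ) (hw : 1 ≤ w) (hwW : w ≤ W) (hWN : W ≤ N)
    -- the windowed-decoding DE solution
    (X : ℕ → ℕ → ℤ → ℝ)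
    (hinit : ∀ z : ℤ, 1 ≤ z → z ≤ (N : ℤ) + (w : ℤ) - 1 → X 1 0 z = 1)
    (hout : ∀ c t : ℕ, ∀ z : ℤ, ¬ (1 ≤ z ∧ z ≤ (N : ℤ) + (w : ℤ) - 1) → X c t z = 0)
    (hupd : ∀ c : ℕ, 1 ≤ c → c + W ≤ N + 1 → ∀ t : ℕ, t + 1 ≤ T →
      ∀ z : ℤ, 1 ≤ z → z ≤ (N : ℤ) + (w : ℤ) - 1 →
      X c (t + 1) z = deUpdate L R ε N w W (c : ℤ) (X c t) z)
    (hshiftwin : ∀ c : ℕ, 1 ≤ c → (c + 1) + W ≤ N + 1 → ∀ z : ℤ, X (c + 1) 0 z = X c T z) :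
    (∀ c : ℕ, 1 ≤ c → c + W ≤ N + 1 → ∀ t : ℕ, t < T → ∀ z : ℤ,
        X c (t + 1) z ≤ X c t z) ∧
    (∀ c : ℕ, 1 ≤ c → c + W ≤ N + 1 → ∀ t : ℕ, t ≤ T → ∀ z : ℤ,
        0 ≤ X c t z ∧ X c t z ≤ 1) :=
  de_decreasing_in_t_and_bounded_general L R hLcoeff hRcoeff hL'pos hR'pos ε hε0 hε1 N w W T X hinit
    hout hupd hshiftwin

end SC
end
end
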